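/- Unbiasedness of the inverse probability weighting (IPW) estimator: Let (Ω, ℱ, ℙ) be a probability space, K ≥ 1, and for each a ∈ Fin K let r_a : Ω → ℝ be integrable, π_a : Ω → ℝ bounded measurable, and p_a : Ω → (0,1] measurable, with each (π_a · r_a)/p_a integrable. Let 𝒢 ⊆ ℱ be a σ-algebra with respect to which every p_a, π_a and r_a is measurable, and let A : Ω → Fin K satisfy E[1_{A = a} | 𝒢] = p_a almost surely for every a. Then E[ (p_A)^{-1} · π_A · r_A ] = E[∑_{a ∈ Fin K} π_a · r_a] = V^π. -/

import Mathlib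

open MeasureTheory ProbabilityTheory

/-- Unbiasedness of the inverse probability weighting (IPW) estimator. -/
theorem ipw_unbiased
    {Ω : Type*} (𝒢 : MeasurableSpace Ω) [mΩ : MeasurableSpace Ω] (Pr : Measure Ω) [IsProbabilityMeasure Pr]
    (K : ℕ) (hK : 1 ≤ K)
    (r π p : Fin K → Ω → ℝ)
    (hr : ∀ a, Integrable (r a) Pr)
    (hπm : ∀ a, Measurable (π a))
    (hπb : ∀ a, ∃ C : ℝ, ∀ ω, |π a ω| ≤ C)
    (hpm : ∀ a, Measurable (p a))
    (hp : ∀ a ω, p a ω ∈ Set.Ioc (0 : ℝ) 1)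
    (hint : ∀ a, Integrable (fun ω => π a ω * r a ω / p a ω) Pr)
    (h𝒢 : 𝒢 ≤ mΩ)
    (hpG : ∀ a, Measurable[𝒢] (p a))
    (hπG : ∀ a, Measurable[𝒢] (π a))
    (hrG : ∀ a, Measurable[𝒢] (r a))
    (A : Ω → Fin K) (hA : Measurable A)
    (hAcond : ∀ a, Pr[({ω | A ω = a}).indicator (fun _ => (1 : ℝ)) | 𝒢]
      =ᵐ[Pr] p a) :
    ∫ ω, (p (A ω) ω)⁻¹ * π (A ω) ω * r (A ω) ω ∂Pr
      = ∫ ω, ∑ a, π a ω * r a ω ∂Pr := by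
  letI : MeasurableSpace Ω := mΩ
  set g : Fin K → Ω → ℝ := fun a ω => (p a ω)⁻¹ * π a ω * r a ω with hg_def
  set f : Fin K → Ω → ℝ := fun a => ({ω | A ω = a}).indicator (fun _ => (1 : ℝ))
  have hg_int : ∀ a, Integrable (g a) Pr := fun a =>
    (hint a).congr (by filter_upwards with ω; simp [hg_def]; ring)
  have hgm : ∀ a, StronglyMeasurable[𝒢] (g a) := fun a =>
    (((hpG a).inv.mul (hπG a)).mul (hrG a)).stronglyMeasurable
  have hAset : ∀ a : Fin K, MeasurableSet[mΩ] {ω | A ω = a} := fun a =>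
    hA (measurableSet_singleton a)
  have hπr_int : ∀ a, Integrable (fun ω => π a ω * r a ω) Pr := by
    intro a
    obtain ⟨C, hC⟩ := hπb a
    exact (hr a).bdd_mul (hπm a).aestronglyMeasurable (c := C) (ae_of_all _ fun ω => by simpa using hC ω)
  have hfg_int : ∀ a, Integrable (g a * f a) Pr := by
    intro a
    have : g a * f a = ({ω | A ω = a}).indicator (g a) := by
      ext ω
      by_cases h : A ω = a <;> simp [f, Set.indicator_apply, h]
    rw [this]
    exact (hg_int a).indicator (hAset a)
  -- pointwise decomposition
  have hpt : ∀ ω, (p (A ω) ω)⁻¹ * π (A ω) ω * r (A ω) ω = ∑ a, g a ω * f a ω := by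
    intro ω
    rw [Finset.sum_eq_single (A ω)]
    · simp [f, g, Set.indicator_apply]
    · intro b _ hb
      simp [f, Set.indicator_apply, Ne.symm hb]
    · simp
  calc ∫ ω, (p (A ω) ω)⁻¹ * π (A ω) ω * r (A ω) ω ∂Pr
      = ∫ ω, ∑ a, g a ω * f a ω ∂Pr := by
        exact integral_congr_ae (by filter_upwards with ω using hpt ω)
    _ = ∑ a, ∫ ω, g a ω * f a ω ∂Pr := integral_finset_sum _ (fun a _ => hfg_int a)
    _ = ∑ a, ∫ ω, π a ω * r a ω ∂Pr := by
        refine Finset.sum_congr rfl (fun a _ => ?_)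
        have h1 : ∫ ω, (g a * f a) ω ∂Pr = ∫ ω, condExp 𝒢 Pr (g a * f a) ω ∂Pr :=
          (integral_condExp h𝒢).symm
        have h2 : condExp 𝒢 Pr (g a * f a) =ᵐ[Pr] fun ω => g a ω * p a ω := by
          have hf_int : Integrable (f a) Pr :=
            (integrable_const (1 : ℝ)).indicator (hAset a)
          refine (condExp_mul_of_stronglyMeasurable_left (hgm a) (hfg_int a) hf_int).trans ?_
          filter_upwards [hAcond a] with ω h
          simp [f, h]
        have h3 : ∀ ω, g a ω * p a ω = π a ω * r a ω := by
          intro ω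
          have hne : p a ω ≠ 0 := ne_of_gt (hp a ω).1
          show (p a ω)⁻¹ * π a ω * r a ω * p a ω = _
          field_simp [g]
        rw [show (∫ ω, g a ω * f a ω ∂Pr) = ∫ ω, (g a * f a) ω ∂Pr from rfl, h1,
          integral_congr_ae h2]
        exact integral_congr_ae (by filter_upwards with ω using h3 ω)
    _ = ∫ ω, ∑ a, π a ω * r a ω ∂Pr :=
        (integral_finset_sum _ (fun a _ => hπr_int a)).symm
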